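/- arXiv:2405.09670 — 2 statements merged into one kernel-verified Lean document; each statement's English description precedes it below -/
import Mathlib

section
/- The operator T_{α,β} is hyponormal: for every x ∈ H one has ‖T*_{α,β} x‖ ≤ ‖T_{α,β} x‖ (equivalently, T*_{α,β}T_{α,β} − T_{α,β}T*_{α,β} is a positive operator). -/
/-!
Beyond the first two coordinates `T` is the forward shift and `T*` the backward shift, so
`‖T* x‖² = |ᾱβ x₀ + β̄ x₁|² + ‖x‖² - |x₀|² - |x₁|²` and
`‖T x‖² = (|α|²|β|² + |β|²)|x₀|² + ‖x‖² - |x₀|²`. Hyponormality thus reduces to a scalar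
inequality in `x₀, x₁`, which follows from the triangle inequality and
`2|α||β|²|x₀||x₁| ≤ |β|²|x₀|² + |α|²|β|²|x₁|²`, using `|β|²(1 + |α|²) ≤ 1 - |α|⁴ ≤ 1`.
-/

open scoped ComplexConjugate

noncomputable section

/-- The Hilbert space `H = ℓ²(ℕ, ℂ)`. -/
abbrev H : Type := lp (fun _ : ℕ => ℂ) 2

/-- The standard orthonormal basis vectors of `ℓ²(ℕ, ℂ)`. -/
noncomputable def e (n : ℕ) : H := lp.single 2 n (1 : ℂ)

open scoped InnerProductSpace

open ContinuousLinearMap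

theorem e_apply (n m : ℕ) : e n m = if m = n then 1 else 0 := by
  simp [e, Pi.single_apply]

theorem inner_e_left (y : H) (n : ℕ) : ⟪e n, y⟫_ℂ = y n := by
  simp [e, lp.inner_single_left]

theorem hasSum_norm_sq (y : H) : HasSum (fun n => ‖y n‖ ^ 2) (‖y‖ ^ 2) := by
  simpa using lp.hasSum_norm (p := 2) (by norm_num) y

theorem adjoint_apply_coord (T : H →L[ℂ] H) (y : H) (m : ℕ) :
    (adjoint T y) m = ⟪T (e m), y⟫_ℂ := by
  rw [← inner_e_left, adjoint_inner_right]

theorem apply_coord (T : H →L[ℂ] H) (x : H) (m : ℕ) :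
    (T x) m = ⟪adjoint T (e m), x⟫_ℂ := by
  rw [← inner_e_left, adjoint_inner_left]

/-- The relations defining `T_{α,β}` on the basis `e n`. -/
structure IsCompressedShift (α β : ℂ) (T : H →L[ℂ] H) : Prop where
  apply_e_zero : T (e 0) = (α * conj β) • e 0 + β • e 1
  apply_e_of_one_le : ∀ n : ℕ, 1 ≤ n → T (e n) = e (n + 1)

namespace IsCompressedShift

variable {α β : ℂ} {T : H →L[ℂ] H}

theorem apply_e_succ (hT : IsCompressedShift α β T) (n : ℕ) : T (e (n + 1)) = e (n + 2) :=
  hT.apply_e_of_one_le (n + 1) (Nat.le_add_left 1 n)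

theorem adjoint_apply_zero (hT : IsCompressedShift α β T) (x : H) :
    adjoint T x 0 = conj α * β * x 0 + conj β * x 1 := by
  simp only [adjoint_apply_coord, hT.apply_e_zero, inner_add_left, inner_smul_left, inner_e_left]
  simp

theorem adjoint_apply_succ (hT : IsCompressedShift α β T) (x : H) (n : ℕ) :
    adjoint T x (n + 1) = x (n + 2) := by
  rw [adjoint_apply_coord, hT.apply_e_succ, inner_e_left]

theorem adjoint_e_zero (hT : IsCompressedShift α β T) : adjoint T (e 0) = (conj α * β) • e 0 := by
  ext (_ | m)
  · simp [adjoint_apply_zero hT, e_apply]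
  · simp [adjoint_apply_succ hT, e_apply]

theorem adjoint_e_one (hT : IsCompressedShift α β T) : adjoint T (e 1) = conj β • e 0 := by
  ext (_ | m)
  · simp [adjoint_apply_zero hT, e_apply]
  · simp [adjoint_apply_succ hT, e_apply]

theorem adjoint_e_add_two (hT : IsCompressedShift α β T) (n : ℕ) :
    adjoint T (e (n + 2)) = e (n + 1) := by
  ext (_ | m)
  · simp [adjoint_apply_zero hT, e_apply]
  · simp [adjoint_apply_succ hT, e_apply]

theorem apply_zero (hT : IsCompressedShift α β T) (x : H) : T x 0 = α * conj β * x 0 := by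
  simp [apply_coord, hT.adjoint_e_zero, inner_e_left, mul_comm]

theorem apply_one (hT : IsCompressedShift α β T) (x : H) : T x 1 = β * x 0 := by
  simp [apply_coord, hT.adjoint_e_one, inner_e_left, mul_comm]

theorem apply_add_two (hT : IsCompressedShift α β T) (x : H) (n : ℕ) :
    T x (n + 2) = x (n + 1) := by
  rw [apply_coord, hT.adjoint_e_add_two, inner_e_left]

theorem norm_sq_adjoint_apply (hT : IsCompressedShift α β T) (x : H) :
    ‖adjoint T x‖ ^ 2 =
      ‖conj α * β * x 0 + conj β * x 1‖ ^ 2 + (‖x‖ ^ 2 - ‖x 0‖ ^ 2 - ‖x 1‖ ^ 2) := by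
  have hTx := (hasSum_nat_add_iff' 1).2 (hasSum_norm_sq (adjoint T x))
  have hx := (hasSum_nat_add_iff' 2).2 (hasSum_norm_sq x)
  simp only [hT.adjoint_apply_succ] at hTx
  simp only [Finset.sum_range_succ, Finset.sum_range_zero, zero_add, hT.adjoint_apply_zero]
    at hTx hx
  linarith [hTx.unique hx]

theorem norm_sq_apply (hT : IsCompressedShift α β T) (x : H) :
    ‖T x‖ ^ 2 = ‖α * conj β * x 0‖ ^ 2 + ‖β * x 0‖ ^ 2 + (‖x‖ ^ 2 - ‖x 0‖ ^ 2) := by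
  have hTx := (hasSum_nat_add_iff' 2).2 (hasSum_norm_sq (T x))
  have hx := (hasSum_nat_add_iff' 1).2 (hasSum_norm_sq x)
  simp only [hT.apply_add_two] at hTx
  simp only [Finset.sum_range_succ, Finset.sum_range_zero, zero_add, hT.apply_zero,
    hT.apply_one] at hTx hx
  linarith [hTx.unique hx]

end IsCompressedShift

theorem sq_mul_add_le_of_sq_add_sq_le_one {p q : ℝ} (h : p ^ 2 + q ^ 2 ≤ 1) (a b : ℝ) :
    (p * q * a + q * b) ^ 2 ≤ (p * q * a) ^ 2 + (q * a) ^ 2 + b ^ 2 := by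
  nlinarith [sq_nonneg (q * a - p * q * b), sq_nonneg (p ^ 2 * b),
    mul_nonneg (mul_nonneg (sq_nonneg b) (sub_nonneg.2 h)) (by positivity : (0 : ℝ) ≤ 1 + p ^ 2)]

theorem norm_sq_conj_mul_add_le {α β : ℂ} (h : ‖α‖ ^ 2 + ‖β‖ ^ 2 ≤ 1) (a b : ℂ) :
    ‖conj α * β * a + conj β * b‖ ^ 2 ≤ ‖α * conj β * a‖ ^ 2 + ‖β * a‖ ^ 2 + ‖b‖ ^ 2 := by
  have htri : ‖conj α * β * a + conj β * b‖ ≤ ‖α‖ * ‖β‖ * ‖a‖ + ‖β‖ * ‖b‖ := by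
    simpa [norm_mul] using norm_add_le (conj α * β * a) (conj β * b)
  simpa [norm_mul] using (pow_le_pow_left₀ (norm_nonneg _) htri 2).trans
    (sq_mul_add_le_of_sq_add_sq_le_one h ‖a‖ ‖b‖)

theorem T_hyponormal_general (α β : ℂ)
    (hnorm : ‖α‖ ^ 2 + ‖β‖ ^ 2 = 1)
    (T : H →L[ℂ] H)
    (hT0 : T (e 0) = (α * conj β) • e 0 + β • e 1)
    (hTn : ∀ n : ℕ, 1 ≤ n → T (e n) = e (n + 1)) :
    ∀ x : H, ‖ContinuousLinearMap.adjoint T x‖ ≤ ‖T x‖ := by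
  intro x
  have hT : IsCompressedShift α β T := ⟨hT0, hTn⟩
  have hsq : ‖adjoint T x‖ ^ 2 ≤ ‖T x‖ ^ 2 := by
    rw [hT.norm_sq_adjoint_apply, hT.norm_sq_apply]
    linarith [norm_sq_conj_mul_add_le hnorm.le (x 0) (x 1)]
  exact (pow_le_pow_iff_left₀ (norm_nonneg _) (norm_nonneg _) two_ne_zero).1 hsq

/-- The operator `T_{α,β}` is hyponormal: `‖T* x‖ ≤ ‖T x‖` for every `x`. -/
theorem T_hyponormal (α β : ℂ) (hα : α ≠ 0) (hβ : β ≠ 0)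
    (hnorm : ‖α‖ ^ 2 + ‖β‖ ^ 2 = 1)
    (T : H →L[ℂ] H)
    (hT0 : T (e 0) = (α * conj β) • e 0 + β • e 1)
    (hTn : ∀ n : ℕ, 1 ≤ n → T (e n) = e (n + 1)) :
    ∀ x : H, ‖ContinuousLinearMap.adjoint T x‖ ≤ ‖T x‖ :=
  T_hyponormal_general α β hnorm T hT0 hTn

end
end

section
/- Let v := e_0 − (conj(α)·β/conj(β))·e_1 (a spanning vector of ker T*_{α,β} = H ⊖ T_{α,β}H), and let u be the unique real root of the cubic z³ + 3z² + 2z − 1. Then the closed linear span of {T_{α,β}^n v : n ≥ 0} equals all of H if and only if |α|² ≤ 1/(u+1). In other words, H = [H ⊖ T_{α,β}H]_{T_{α,β}} if and only if |α|² ≤ 1/(u+1). -/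
open scoped ComplexConjugate

noncomputable section

/-!
Put `D = α β̄ / β` and `q = ᾱ β + β / α`. For `w ∈ H` the numbers `sₙ = ⟪Tⁿ e₀, w⟫` satisfy
`sₙ₊₁ = ᾱ β sₙ + β̄ w (n + 1)`, and `w ⟂ Tⁿ v` says `sₙ = D w (n + 1)`; together these turn the
recurrence into `sₙ₊₁ = q sₙ`. Hence `w` is orthogonal to the cyclic subspace of `v` exactly when
`D w (n + 1) = qⁿ w 0` for all `n`, and such a nonzero `w` lies in `ℓ²` iff `‖q‖ < 1`.
Finally `‖q‖ ‖α‖ = ‖β‖ (‖α‖² + 1)`, so with `t = ‖α‖² = 1 - ‖β‖²` the condition `1 ≤ ‖q‖` reads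
`t³ + t² ≤ 1`, and `t = 1 / (u + 1)` is the positive root of `t³ + t² = 1`.
-/

theorem forall_eq_mul_succ_iff_geometric {K : Type*} [Field K] {A B D q : K} (hD : D ≠ 0)
    (hq : A * D + B = q * D) {s x : ℕ → K} (hs0 : s 0 = x 0)
    (hs : ∀ n, s (n + 1) = A * s n + B * x (n + 1)) :
    (∀ n, s n = D * x (n + 1)) ↔ ∀ n, D * x (n + 1) = q ^ n * x 0 := by
  have step : ∀ n, s n = q ^ n * x 0 → D * x (n + 1) = q ^ n * x 0 →
      s (n + 1) = q ^ (n + 1) * x 0 := fun n hsn hxn =>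
    mul_left_cancel₀ hD <| by
      linear_combination D * hs n + A * D * hsn + B * hxn + q ^ n * x 0 * hq
  constructor
  · intro h
    have geom : ∀ n, s n = q ^ n * x 0 := by
      intro n
      induction n with
      | zero => simp [hs0]
      | succ n ih => exact step n ih (by rw [← h, ih])
    exact fun n => by rw [← h, geom]
  · intro h
    have geom : ∀ n, s n = q ^ n * x 0 := by
      intro n
      induction n with
      | zero => simp [hs0]
      | succ n ih => exact step n ih (h n)
    exact fun n => by rw [geom, h]

theorem memℓp_nat_succ_iff {E : Type*} [NormedAddCommGroup E] {p : ENNReal} (hp : 0 < p.toReal)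
    {f : ℕ → E} : Memℓp (fun n => f (n + 1)) p ↔ Memℓp f p := by
  simp only [memℓp_gen_iff hp]
  exact summable_nat_add_iff (f := fun n => ‖f n‖ ^ p.toReal) 1

theorem memℓp_geometric_iff {𝕜 : Type*} [NormedDivisionRing 𝕜] {p : ENNReal} (hp : 0 < p.toReal)
    {q : 𝕜} : Memℓp (fun n : ℕ => q ^ n) p ↔ ‖q‖ < 1 := by
  have hpow : ∀ n : ℕ, ‖q ^ n‖ ^ p.toReal = (‖q‖ ^ p.toReal) ^ n := by
    intro n
    rw [norm_pow, ← Real.rpow_natCast, ← Real.rpow_mul (norm_nonneg q), mul_comm,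
      Real.rpow_mul (norm_nonneg q), Real.rpow_natCast]
  simp only [memℓp_gen_iff hp, hpow, summable_geometric_iff_norm_lt_one, Real.norm_eq_abs]
  rw [abs_of_nonneg (by positivity), Real.rpow_lt_one_iff' (norm_nonneg q) hp]

theorem lp.forall_eq_zero_of_geometric_tail_iff {𝕜 : Type*} [NormedField 𝕜] {p : ENNReal}
    [Fact (1 ≤ p)] (hp : p ≠ ⊤) {D : 𝕜} (hD : D ≠ 0) (q : 𝕜) :
    (∀ w : lp (fun _ : ℕ => 𝕜) p, (∀ n, D * w (n + 1) = q ^ n * w 0) → w = 0) ↔ 1 ≤ ‖q‖ := by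
  have hp0 : 0 < p.toReal := ENNReal.toReal_pos (zero_lt_one.trans_le Fact.out).ne' hp
  rw [← not_lt, ← memℓp_geometric_iff hp0]
  constructor
  · intro h hgeom
    let w : lp (fun _ : ℕ => 𝕜) p :=
      ⟨fun n => if n = 0 then D else q ^ (n - 1), (memℓp_nat_succ_iff hp0).1 (by simpa using hgeom)⟩
    have hw : w 0 = 0 := by rw [h w fun n => by simp [w, mul_comm]]; rfl
    exact hD hw
  · intro hq w hw
    have hw0 : w 0 = 0 := by
      by_contra hw0
      refine hq ?_
      convert ((memℓp_nat_succ_iff hp0).2 (lp.memℓp w)).const_smul (D / w 0) using 2 with n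
      simp only [Pi.smul_apply, smul_eq_mul]
      field_simp
      exact (hw n).symm
    ext n
    cases n with
    | zero => exact hw0
    | succ n => simpa [hw0, hD] using hw n

theorem Submodule.mem_orthogonal_span_iff {𝕜 E : Type*} [RCLike 𝕜] [NormedAddCommGroup E]
    [InnerProductSpace 𝕜 E] (s : Set E) (w : E) :
    w ∈ (span 𝕜 s)ᗮ ↔ ∀ x ∈ s, inner 𝕜 x w = 0 := by
  rw [← span_singleton_le_iff_mem, ← isOrtho_iff_le, isOrtho_comm, isOrtho_span]
  simp

theorem norm_conj_mul_add_div_mul_norm (α β : ℂ) (hα : α ≠ 0) :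
    ‖conj α * β + β / α‖ * ‖α‖ = ‖β‖ * (‖α‖ ^ 2 + 1) := by
  have h : (conj α * β + β / α) * α = β * ((‖α‖ ^ 2 + 1 : ℝ) : ℂ) := by
    push_cast
    rw [← Complex.mul_conj']
    field_simp
  rw [← norm_mul, h, norm_mul, Complex.norm_real, Real.norm_of_nonneg (by positivity)]

theorem le_mul_sq_add_one_iff {a b : ℝ} (ha : 0 ≤ a) (hb : 0 ≤ b) (hab : a ^ 2 + b ^ 2 = 1) :
    a ≤ b * (a ^ 2 + 1) ↔ (a ^ 2) ^ 3 + (a ^ 2) ^ 2 ≤ 1 := by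
  rw [← sq_le_sq₀ ha (by positivity), mul_pow, show b ^ 2 = 1 - a ^ 2 by linarith]
  constructor <;> intro h <;> nlinarith

theorem cubic_root_add_one_pos {u : ℝ} (hu : u ^ 3 + 3 * u ^ 2 + 2 * u - 1 = 0) : 0 < u + 1 := by
  nlinarith [sq_nonneg (u + 1), sq_nonneg (3 * u ^ 2 + 6 * u + 2)]

theorem le_one_div_cubic_root_add_one_iff {u t : ℝ} (hu : u ^ 3 + 3 * u ^ 2 + 2 * u - 1 = 0)
    (ht : 0 ≤ t) : t ≤ 1 / (u + 1) ↔ t ^ 3 + t ^ 2 ≤ 1 := by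
  have hu1 := cubic_root_add_one_pos hu
  have hmono : StrictMonoOn (fun t : ℝ => t ^ 3 + t ^ 2) (Set.Ici 0) :=
    (pow_left_strictMonoOn₀ three_ne_zero).add (pow_left_strictMonoOn₀ two_ne_zero)
  have hroot : (1 / (u + 1)) ^ 3 + (1 / (u + 1)) ^ 2 = 1 := by
    field_simp
    linear_combination -hu
  conv_rhs => rw [← hroot]
  exact (hmono.le_iff_le ht (by simp only [Set.mem_Ici]; positivity)).symm

theorem inner_e_left_s13 (k : ℕ) (w : H) : inner ℂ (e k) w = w k := by
  simp [e, lp.inner_single_left, RCLike.inner_apply]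

section Compression

variable {α β : ℂ} {T : H →L[ℂ] H}

theorem pow_apply_e_of_one_le (hTn : ∀ n : ℕ, 1 ≤ n → T (e n) = e (n + 1)) {m : ℕ} (hm : 1 ≤ m)
    (n : ℕ) : (T ^ n) (e m) = e (m + n) := by
  induction n with
  | zero => rfl
  | succ n ih => rw [pow_succ', mul_apply_eq_comp, ih, hTn _ (by omega), add_assoc]

theorem pow_succ_apply_e_zero (hT0 : T (e 0) = (α * conj β) • e 0 + β • e 1)
    (hTn : ∀ n : ℕ, 1 ≤ n → T (e n) = e (n + 1)) (n : ℕ) :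
    (T ^ (n + 1)) (e 0) = (α * conj β) • (T ^ n) (e 0) + β • e (n + 1) := by
  rw [pow_succ, mul_apply_eq_comp, hT0, map_add, map_smul, map_smul,
    pow_apply_e_of_one_le hTn le_rfl, add_comm 1 n]

theorem inner_pow_succ_apply_e_zero (hT0 : T (e 0) = (α * conj β) • e 0 + β • e 1)
    (hTn : ∀ n : ℕ, 1 ≤ n → T (e n) = e (n + 1)) (n : ℕ) (w : H) :
    inner ℂ ((T ^ (n + 1)) (e 0)) w
      = conj α * β * inner ℂ ((T ^ n) (e 0)) w + conj β * w (n + 1) := by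
  rw [pow_succ_apply_e_zero hT0 hTn, inner_add_left, inner_smul_left, inner_smul_left,
    inner_e_left_s13]
  simp

theorem inner_pow_apply_e_zero_sub (hTn : ∀ n : ℕ, 1 ≤ n → T (e n) = e (n + 1)) (c : ℂ) (n : ℕ)
    (w : H) :
    inner ℂ ((T ^ n) (e 0 - c • e 1)) w = inner ℂ ((T ^ n) (e 0)) w - conj c * w (n + 1) := by
  rw [map_sub, map_smul, pow_apply_e_of_one_le hTn le_rfl, inner_sub_left, inner_smul_left,
    inner_e_left_s13, add_comm 1 n]

theorem mem_orthogonal_span_pow_iff (hα : α ≠ 0) (hβ : β ≠ 0)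
    (hT0 : T (e 0) = (α * conj β) • e 0 + β • e 1)
    (hTn : ∀ n : ℕ, 1 ≤ n → T (e n) = e (n + 1)) (w : H) :
    w ∈ (Submodule.span ℂ
        (Set.range fun n : ℕ => (T ^ n) (e 0 - (conj α * β / conj β) • e 1)))ᗮ ↔
      ∀ n, α * conj β / β * w (n + 1) = (conj α * β + β / α) ^ n * w 0 := by
  have hD : α * conj β / β ≠ 0 := by simp [hα, hβ]
  rw [Submodule.mem_orthogonal_span_iff, Set.forall_mem_range]
  simp_rw [inner_pow_apply_e_zero_sub hTn, sub_eq_zero, map_div₀, map_mul, Complex.conj_conj]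
  exact forall_eq_mul_succ_iff_geometric hD (by field_simp) (by simpa using inner_e_left_s13 0 w)
    (inner_pow_succ_apply_e_zero hT0 hTn · w)

end Compression

theorem full_space_wandering_subspace_property_general (α β : ℂ) (hα : α ≠ 0) (hβ : β ≠ 0)
    (hnorm : ‖α‖ ^ 2 + ‖β‖ ^ 2 = 1)
    (T : H →L[ℂ] H)
    (hT0 : T (e 0) = (α * conj β) • e 0 + β • e 1)
    (hTn : ∀ n : ℕ, 1 ≤ n → T (e n) = e (n + 1))
    (v : H) (hv : v = e 0 - (conj α * β / conj β) • e 1)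
    (u : ℝ) (hu : u ^ 3 + 3 * u ^ 2 + 2 * u - 1 = 0) :
    (Submodule.span ℂ (Set.range fun n : ℕ => (T ^ n) v)).topologicalClosure = ⊤ ↔
      ‖α‖ ^ 2 ≤ 1 / (u + 1) := by
  subst hv
  have ha : 0 < ‖α‖ := norm_pos_iff.mpr hα
  have hD : α * conj β / β ≠ 0 := by simp [hα, hβ]
  rw [Submodule.topologicalClosure_eq_top_iff, Submodule.eq_bot_iff]
  simp_rw [mem_orthogonal_span_pow_iff hα hβ hT0 hTn]
  rw [lp.forall_eq_zero_of_geometric_tail_iff (p := 2) ENNReal.ofNat_ne_top hD,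
    ← mul_le_mul_iff_left₀ ha, one_mul, norm_conj_mul_add_div_mul_norm α β hα,
    le_mul_sq_add_one_iff ha.le (norm_nonneg β) hnorm,
    le_one_div_cubic_root_add_one_iff hu (sq_nonneg _)]

/-- The kernel vector `v = e 0 − (conj α · β / conj β) • e 1` of `T*` generates `H`
iff `|α|² ≤ 1/(u+1)`, where `u` is the unique real root of `z³ + 3z² + 2z − 1`. -/
theorem full_space_wandering_subspace_property (α β : ℂ) (hα : α ≠ 0) (hβ : β ≠ 0)
    (hnorm : ‖α‖ ^ 2 + ‖β‖ ^ 2 = 1)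
    (T : H →L[ℂ] H)
    (hT0 : T (e 0) = (α * conj β) • e 0 + β • e 1)
    (hTn : ∀ n : ℕ, 1 ≤ n → T (e n) = e (n + 1))
    (v : H) (hv : v = e 0 - (conj α * β / conj β) • e 1)
    (u : ℝ) (hu : u ^ 3 + 3 * u ^ 2 + 2 * u - 1 = 0)
    (huniq : ∀ y : ℝ, y ^ 3 + 3 * y ^ 2 + 2 * y - 1 = 0 → y = u) :
    (Submodule.span ℂ (Set.range fun n : ℕ => (T ^ n) v)).topologicalClosure = ⊤ ↔
      ‖α‖ ^ 2 ≤ 1 / (u + 1) :=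
  full_space_wandering_subspace_property_general α β hα hβ hnorm T hT0 hTn v hv u hu
end
end
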